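/- For every n ≥ 5, the cycle graph C_n is prime: it is connected and admits no split. -/

import Mathlib

/-- The cycle graph `C_n` on vertices `ZMod n`, with `i` adjacent to `i + 1` and `i - 1`. -/
def cycleGraph (n : ℕ) : SimpleGraph (ZMod n) where
  Adj i j := i ≠ j ∧ (j = i + 1 ∨ j = i - 1)
  symm := ⟨by
    rintro i j ⟨h, h1 | h1⟩
    · exact ⟨h.symm, Or.inr (by rw [h1]; ring)⟩
    · exact ⟨h.symm, Or.inl (by rw [h1]; ring)⟩⟩
  loopless := ⟨fun i h => h.1 rfl⟩

/-- A split of a simple graph `G` on vertex set `V`: a partition `V = V0 ⊔ V1` with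
`|V0| ≥ 2` and `|V1| ≥ 2`, such that the edges between `V0` and `V1` are exactly
those of a complete bipartite graph `K(U0, U1)` with `U0 ⊆ V0`, `U1 ⊆ V1`. -/
def IsSplit {V : Type*} (G : SimpleGraph V) (V0 V1 : Set V) : Prop :=
  V0 ∪ V1 = Set.univ ∧ Disjoint V0 V1 ∧ 2 ≤ V0.ncard ∧ 2 ≤ V1.ncard ∧
    ∃ U0 ⊆ V0, ∃ U1 ⊆ V1, ∀ u ∈ V0, ∀ w ∈ V1, (G.Adj u w ↔ u ∈ U0 ∧ w ∈ U1)

/-!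
If `U0 ⊆ {a}`, every vertex of `V0` other than `a` keeps both its neighbours in `V0`, so walking
around the cycle from a second vertex of `V0` sweeps out all of `C_n` except `a`, leaving at most
one vertex for `V1`. Hence `U0` and `U1` both contain two distinct vertices, and since all four
pairs between them are edges, two distinct vertices of `C_n` would have two common neighbours,
which needs `n ∣ 4`.
-/

open Set

theorem mem_of_adj_of_notMem_of_split {V : Type*} {G : SimpleGraph V} {V0 V1 U0 U1 : Set V}
    (hcover : V0 ∪ V1 = univ)
    (hcross : ∀ u ∈ V0, ∀ w ∈ V1, (G.Adj u w ↔ u ∈ U0 ∧ w ∈ U1))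
    {y z : V} (hy : y ∈ V0) (hyU : y ∉ U0) (hyz : G.Adj y z) : z ∈ V0 :=
  ((hcover ▸ mem_univ z : z ∈ V0 ∪ V1)).resolve_right
    fun hz => hyU ((hcross y hy z hz).1 hyz).1

namespace ZMod

variable {n : ℕ} [NeZero n]

theorem mem_of_add_one_mem_of_sub_one_mem {S : Set (ZMod n)} {a x z : ZMod n}
    (hS : ∀ y ∈ S, y ≠ a → y + 1 ∈ S ∧ y - 1 ∈ S) (hx : x ∈ S) (hxa : x ≠ a)
    (hza : z ≠ a) : z ∈ S := by
  have shift (y : ZMod n) : a + ((y - a).val : ZMod n) = y := by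
    rw [natCast_zmod_val, add_sub_cancel]
  have hne (k : ℕ) (hk : 0 < k) (hkn : k < n) : a + k ≠ a := fun h => by
    rw [add_eq_left, natCast_eq_zero_iff] at h
    exact Nat.not_dvd_of_pos_of_lt hk hkn h
  set p := (x - a).val
  have hp : 0 < p := val_pos.2 (sub_ne_zero.2 hxa)
  have hpn : p < n := val_lt _
  have up (k : ℕ) (hpk : p ≤ k) : k < n → a + k ∈ S := by
    induction k, hpk using Nat.le_induction with
    | base => exact fun _ => by rwa [shift]
    | succ k hpk ih =>
      intro hk
      have := (hS _ (ih (by omega)) (hne k (by omega) (by omega))).1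
      rwa [Nat.cast_succ, ← add_assoc]
  have down (k : ℕ) (hkp : k ≤ p) : 0 < k → a + k ∈ S := by
    induction hkp using Nat.decreasingInduction with
    | self => exact fun _ => by rwa [shift]
    | of_succ k hk ih =>
      intro hk0
      have := (hS _ (ih (by omega)) (hne (k + 1) (by omega) (by omega))).2
      rwa [Nat.cast_succ, ← add_assoc, add_sub_cancel_right] at this
  rw [← shift z]
  rcases le_total p (z - a).val with h | h
  · exact up _ h (val_lt _)
  · exact down _ h (val_pos.2 (sub_ne_zero.2 hza))

end ZMod

section CycleGraph

variable {n : ℕ}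

theorem cycleGraph_adj_add_one [Nontrivial (ZMod n)] (v : ZMod n) :
    (cycleGraph n).Adj v (v + 1) :=
  ⟨(succ_ne_self v).symm, Or.inl rfl⟩

theorem cycleGraph_adj_sub_one [Nontrivial (ZMod n)] (v : ZMod n) :
    (cycleGraph n).Adj v (v - 1) :=
  ⟨(pred_ne_self v).symm, Or.inr rfl⟩

theorem cycleGraph_reachable_add_one (v : ZMod n) : (cycleGraph n).Reachable v (v + 1) := by
  by_cases h : v = v + 1
  · exact h ▸ .refl v
  · exact SimpleGraph.Adj.reachable ⟨h, Or.inl rfl⟩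

theorem cycleGraph_connected [NeZero n] : (cycleGraph n).Connected := by
  have reach (k : ℕ) : (cycleGraph n).Reachable 0 k := by
    induction k with
    | zero => rw [Nat.cast_zero]
    | succ k ih => rw [Nat.cast_succ]; exact ih.trans (cycleGraph_reachable_add_one _)
  exact (SimpleGraph.connected_iff_exists_forall_reachable _).2
    ⟨0, fun w => ZMod.natCast_zmod_val w ▸ reach w.val⟩

theorem cycleGraph_commonNeighbors_subsingleton (hn : 5 ≤ n) {a c : ZMod n} (hac : a ≠ c) :
    ((cycleGraph n).commonNeighbors a c).Subsingleton := by
  have h4 : (4 : ZMod n) ≠ 0 := by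
    rw [← Nat.cast_ofNat, Ne, ZMod.natCast_eq_zero_iff]
    exact Nat.not_dvd_of_pos_of_lt (by norm_num) (by omega)
  -- `b ≠ d` forces `{b, d} = {a - 1, a + 1} = {c - 1, c + 1}`, hence `a - c = ±2 = ∓2`.
  rintro b ⟨⟨-, hab⟩, ⟨-, hcb⟩⟩ d ⟨⟨-, had⟩, ⟨-, hcd⟩⟩
  by_contra hbd
  rcases hab with hab | hab <;> rcases hcb with hcb | hcb <;>
    rcases had with had | had <;> rcases hcd with hcd | hcd <;> grind

theorem cycleGraph_nontrivial_of_split [NeZero n] {V0 V1 U0 U1 : Set (ZMod n)}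
    (hcover : V0 ∪ V1 = univ) (hdisj : Disjoint V0 V1) (hV0 : 2 ≤ V0.ncard)
    (hV1 : 2 ≤ V1.ncard)
    (hcross : ∀ u ∈ V0, ∀ w ∈ V1, ((cycleGraph n).Adj u w ↔ u ∈ U0 ∧ w ∈ U1)) :
    U0.Nontrivial := by
  rw [← one_lt_ncard_iff_nontrivial, ← not_le, ncard_le_one_iff_subset_singleton]
  rintro ⟨a, ha⟩
  obtain ⟨x, hx, hxa⟩ := exists_ne_of_one_lt_ncard hV0 a
  have : Nontrivial (ZMod n) := nontrivial_of_ne x a hxa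
  have hclosed : ∀ y ∈ V0, y ≠ a → y + 1 ∈ V0 ∧ y - 1 ∈ V0 := fun y hy hya =>
    have hyU : y ∉ U0 := fun h => hya (ha h)
    ⟨mem_of_adj_of_notMem_of_split hcover hcross hy hyU (cycleGraph_adj_add_one y),
      mem_of_adj_of_notMem_of_split hcover hcross hy hyU (cycleGraph_adj_sub_one y)⟩
  have hV1a : V1 ⊆ {a} := fun w hw => by_contra fun hwa =>
    disjoint_left.1 hdisj (ZMod.mem_of_add_one_mem_of_sub_one_mem hclosed hx hxa hwa) hw
  have := (ncard_le_ncard hV1a).trans_eq (ncard_singleton a)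
  omega

end CycleGraph

/-- For every `n ≥ 5`, the cycle graph `C_n` is prime: it is connected and
admits no split. -/
theorem stmt6 (n : ℕ) (hn : 5 ≤ n) :
    (cycleGraph n).Connected ∧ ∀ V0 V1 : Set (ZMod n), ¬ IsSplit (cycleGraph n) V0 V1 := by
  have : NeZero n := ⟨by omega⟩
  refine ⟨cycleGraph_connected, ?_⟩
  rintro V0 V1 ⟨hcover, hdisj, hV0, hV1, U0, hU0, U1, hU1, hcross⟩
  have hcross' : ∀ w ∈ V1, ∀ u ∈ V0, ((cycleGraph n).Adj w u ↔ w ∈ U1 ∧ u ∈ U0) :=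
    fun w hw u hu => by rw [SimpleGraph.adj_comm, and_comm]; exact hcross u hu w hw
  obtain ⟨a, ha, c, hc, hac⟩ := cycleGraph_nontrivial_of_split hcover hdisj hV0 hV1 hcross
  obtain ⟨b, hb, d, hd, hbd⟩ :=
    cycleGraph_nontrivial_of_split (union_comm V0 V1 ▸ hcover) hdisj.symm hV1 hV0 hcross'
  have hadj {u w} (hu : u ∈ U0) (hw : w ∈ U1) : (cycleGraph n).Adj u w :=
    (hcross u (hU0 hu) w (hU1 hw)).2 ⟨hu, hw⟩
  exact hbd (cycleGraph_commonNeighbors_subsingleton hn hac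
    ⟨hadj ha hb, hadj hc hb⟩ ⟨hadj ha hd, hadj hc hd⟩)
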